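/- arXiv:1802.04482 — 7 statements merged into one kernel-verified Lean document; each statement's English description precedes it below -/
import Mathlib

section
/- Let E be a field containing 𝔽_q, let σ : E → E be the q-power Frobenius x ↦ x^q, let V be a finite-dimensional 𝔽_q-vector space, and let τ : V ⊗_{𝔽_q} E → V ⊗_{𝔽_q} E be the σ-semilinear map id_V ⊗ σ. For an E-subspace L ⊆ V ⊗ E write τ*L for the E-linear span of τ(L). Suppose L is a toy shtuka, i.e. dim_E L − dim_E(L ∩ τ*L) ≤ 1. Let W ⊆ V be an 𝔽_q-subspace, put L' = L ∩ (W ⊗ E) and L'' = image of L under the projection V ⊗ E → (V/W) ⊗ E. Then τ*L' = L' or τ*L'' = L''. -/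
/-!
Write `τ^* M` (`twist`) for the `E`-span of `(σ ⊗ id) M` and `d(M) = dim M - dim (M ∩ τ^* M)`
(`defect`). Since `σ ⊗ id` fixes `1 ⊗ V`, every functional `f` has a twist `g` with
`g ∘ (σ ⊗ id) = σ ∘ f`, so twisting preserves linear independence and hence dimension; it also
commutes with base-changed `𝔽_q`-linear maps. Rank–nullity for `V ⊗ E → (V/W) ⊗ E` then gives
`τ^* L' = τ^* L ∩ (W ⊗ E)` and `τ^* L'' = image of τ^* L`, so `L ∩ τ^* L` maps into
`L'' ∩ τ^* L''` with kernel inside `L' ∩ τ^* L'`, whence `d(L') + d(L'') ≤ d(L) ≤ 1`.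
A subspace of defect `0` lies in its twist, which has the same dimension.
-/

open TensorProduct Module

theorem LinearMap.finrank_inf_ker_add_finrank_map {K A B : Type*} [DivisionRing K]
    [AddCommGroup A] [Module K A] [AddCommGroup B] [Module K B]
    (π : A →ₗ[K] B) (M : Submodule K A) [FiniteDimensional K M] :
    finrank K ↥(M ⊓ LinearMap.ker π) + finrank K ↥(M.map π) = finrank K M := by
  have h := (π.domRestrict M).finrank_range_add_finrank_ker
  have hker : (LinearMap.ker π).comap M.subtype = (M ⊓ LinearMap.ker π).comap M.subtype := by
    rw [Submodule.comap_inf, Submodule.comap_subtype_self, top_inf_eq]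
  rw [LinearMap.range_domRestrict, LinearMap.ker_domRestrict, hker,
    (Submodule.comapSubtypeEquivOfLe inf_le_left).finrank_eq] at h
  omega

namespace ToyShtuka

variable {F E : Type*} [Field F] [Field E] [Algebra F E]
variable {U U' : Type*} [AddCommGroup U] [Module F U] [AddCommGroup U'] [Module F U']

def twist (σ : E →ₐ[F] E) (M : Submodule E (E ⊗[F] U)) : Submodule E (E ⊗[F] U) :=
  Submodule.span E (σ.toLinearMap.rTensor U '' M)

variable (σ : E →ₐ[F] E)

theorem rTensor_algHom_smul (c : E) (x : E ⊗[F] U) :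
    σ.toLinearMap.rTensor U (c • x) = σ c • σ.toLinearMap.rTensor U x := by
  induction x using TensorProduct.induction_on with
  | zero => simp
  | tmul e u => simp [smul_tmul']
  | add x y hx hy => simp [hx, hy]

theorem twist_span (s : Set (E ⊗[F] U)) :
    twist σ (Submodule.span E s) = Submodule.span E (σ.toLinearMap.rTensor U '' s) := by
  refine le_antisymm (Submodule.span_le.2 ?_)
    (Submodule.span_mono (Set.image_mono Submodule.subset_span))
  rintro _ ⟨y, hy, rfl⟩
  induction hy using Submodule.span_induction with
  | mem x hx => exact Submodule.subset_span ⟨x, hx, rfl⟩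
  | zero => simp
  | add x y _ _ hx hy => rw [map_add]; exact add_mem hx hy
  | smul c x _ hx => rw [rTensor_algHom_smul]; exact Submodule.smul_mem _ _ hx

theorem twist_mono : Monotone (twist σ (U := U)) :=
  fun _ _ h => Submodule.span_mono (Set.image_mono h)

theorem twist_baseChange (W : Submodule F U) : twist σ (W.baseChange E) = W.baseChange E := by
  rw [Submodule.baseChange_eq_span, twist_span, Submodule.map_coe, ← Set.image_comp]
  congr 2
  funext w
  simp

theorem exists_comp_rTensor_eq (f : E ⊗[F] U →ₗ[E] E) :
    ∃ g : E ⊗[F] U →ₗ[E] E, ∀ y, g (σ.toLinearMap.rTensor U y) = σ (f y) := by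
  refine ⟨(σ.toLinearMap ∘ₗ f.restrictScalars F ∘ₗ TensorProduct.mk F E U 1).liftBaseChange E,
    fun y => ?_⟩
  induction y using TensorProduct.induction_on with
  | zero => simp
  | tmul e u =>
    have : f (e ⊗ₜ[F] u) = e * f (1 ⊗ₜ u) := by
      rw [← smul_eq_mul, ← map_smul, smul_tmul', smul_eq_mul, mul_one]
    simp [this]
  | add x y hx hy => simp [hx, hy]

theorem linearIndependent_rTensor {ι : Type*} {v : ι → E ⊗[F] U} (hv : LinearIndependent E v) :
    LinearIndependent E (σ.toLinearMap.rTensor U ∘ v) := by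
  rw [linearIndependent_iff']
  intro s c hc i hi
  obtain ⟨f, hf⟩ := LinearMap.exists_extend (Finsupp.lapply i ∘ₗ hv.repr)
  have hfv : ∀ j, f (v j) = Finsupp.single j 1 i := fun j => by
    simpa [hv.repr_eq_single j] using LinearMap.congr_fun hf ⟨v j, Submodule.subset_span ⟨j, rfl⟩⟩
  obtain ⟨g, hg⟩ := exists_comp_rTensor_eq σ f
  have hgc := congrArg g hc
  simp only [Function.comp_apply, map_sum, map_smul, hg, hfv, map_zero, smul_eq_mul] at hgc
  rw [Finset.sum_eq_single i (fun j _ hj => by simp [hj]) (absurd hi)] at hgc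
  simpa using hgc

theorem rank_twist (M : Submodule E (E ⊗[F] U)) :
    Module.rank E (twist σ M) = Module.rank E M := by
  let b := Basis.ofVectorSpace E M
  have hv : LinearIndependent E (M.subtype ∘ b) :=
    b.linearIndependent.map' M.subtype M.ker_subtype
  have hM : M = Submodule.span E (Set.range (M.subtype ∘ b)) := by
    rw [Set.range_comp, ← Submodule.map_span, b.span_eq, Submodule.map_subtype_top]
  rw [hM, twist_span, ← Set.range_comp, rank_span (linearIndependent_rTensor σ hv), rank_span hv,
    Cardinal.mk_range_eq _ (linearIndependent_rTensor σ hv).injective,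
    Cardinal.mk_range_eq _ hv.injective]

theorem finrank_twist (M : Submodule E (E ⊗[F] U)) :
    finrank E (twist σ M) = finrank E M :=
  congrArg Cardinal.toNat (rank_twist σ M)

theorem map_baseChange_twist (f : U →ₗ[F] U') (M : Submodule E (E ⊗[F] U)) :
    (twist σ M).map (f.baseChange E) = twist σ (M.map (f.baseChange E)) := by
  rw [twist, twist, Submodule.map_span, Submodule.map_coe, ← Set.image_comp, ← Set.image_comp]
  congr 2
  funext x
  induction x using TensorProduct.induction_on with
  | zero => simp
  | tmul e u => simp
  | add x y hx hy => simp_all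

theorem ker_baseChange_mkQ (W : Submodule F U) :
    LinearMap.ker (W.mkQ.baseChange E) = W.baseChange E := by
  ext x
  simpa [Submodule.baseChange, LinearMap.baseChange_eq_ltensor] using
    congrArg (x ∈ ·) (lTensor_mkQ E W)

noncomputable def defect (M : Submodule E (E ⊗[F] U)) : ℕ :=
  finrank E M - finrank E ↥(M ⊓ twist σ M)

variable [FiniteDimensional F U]

theorem defect_add_finrank_inf_twist (M : Submodule E (E ⊗[F] U)) :
    defect σ M + finrank E ↥(M ⊓ twist σ M) = finrank E M :=
  Nat.sub_add_cancel (Submodule.finrank_mono inf_le_left)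

theorem twist_eq_of_defect_eq_zero {M : Submodule E (E ⊗[F] U)} (h : defect σ M = 0) :
    twist σ M = M := by
  have hM : M ⊓ twist σ M = M :=
    Submodule.eq_of_le_of_finrank_le inf_le_left (by
      have := defect_add_finrank_inf_twist σ M
      omega)
  exact (Submodule.eq_of_le_of_finrank_le (inf_eq_left.1 hM) (finrank_twist σ M).le).symm

variable (W : Submodule F U)

theorem twist_inf_baseChange (M : Submodule E (E ⊗[F] U)) :
    twist σ (M ⊓ W.baseChange E) = twist σ M ⊓ W.baseChange E := by
  have hle : twist σ (M ⊓ W.baseChange E) ≤ twist σ M ⊓ W.baseChange E :=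
    le_inf (twist_mono σ inf_le_left)
      ((twist_mono σ inf_le_right).trans (twist_baseChange σ W).le)
  refine Submodule.eq_of_le_of_finrank_le hle ?_
  have hM := (W.mkQ.baseChange E).finrank_inf_ker_add_finrank_map M
  have hτM := (W.mkQ.baseChange E).finrank_inf_ker_add_finrank_map (twist σ M)
  rw [ker_baseChange_mkQ] at hM hτM
  rw [map_baseChange_twist, finrank_twist, finrank_twist] at hτM
  rw [finrank_twist]
  omega

theorem defect_inf_add_defect_map_le (M : Submodule E (E ⊗[F] U)) :
    defect σ (M ⊓ W.baseChange E) + defect σ (M.map (W.mkQ.baseChange E)) ≤ defect σ M := by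
  set π := W.mkQ.baseChange E
  have hM := π.finrank_inf_ker_add_finrank_map M
  have hMτM := π.finrank_inf_ker_add_finrank_map (M ⊓ twist σ M)
  rw [ker_baseChange_mkQ] at hM hMτM
  have hker : M ⊓ twist σ M ⊓ W.baseChange E ≤
      M ⊓ W.baseChange E ⊓ twist σ (M ⊓ W.baseChange E) := by
    rw [twist_inf_baseChange]
    exact fun x hx => ⟨⟨hx.1.1, hx.2⟩, hx.1.2, hx.2⟩
  have hmap : (M ⊓ twist σ M).map π ≤ M.map π ⊓ twist σ (M.map π) := by
    rw [← map_baseChange_twist]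
    exact le_inf (Submodule.map_mono inf_le_left) (Submodule.map_mono inf_le_right)
  have hker_le := Submodule.finrank_mono hker
  have hmap_le := Submodule.finrank_mono hmap
  have hdM := defect_add_finrank_inf_twist σ M
  have hdM' := defect_add_finrank_inf_twist σ (M ⊓ W.baseChange E)
  have hdM'' := defect_add_finrank_inf_twist σ (M.map π)
  omega

end ToyShtuka

/-- For a toy shtuka `L ⊆ V ⊗ E` and an `𝔽_q`-subspace `W ⊆ V`, either
`L ∩ (W ⊗ E)` or the image of `L` in `(V/W) ⊗ E` is Frobenius-stable. -/
theorem toy_shtuka_dichotomy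
    {F E : Type*} [Field F] [Fintype F] [Field E] [Algebra F E]
    {V : Type*} [AddCommGroup V] [Module F V] [FiniteDimensional F V]
    (σ : E →ₗ[F] E) (hσ : ∀ x : E, σ x = x ^ Fintype.card F)
    (L : Submodule E (E ⊗[F] V))
    (hL : finrank E ↥L -
        finrank E ↥(L ⊓ Submodule.span E
          (⇑(LinearMap.rTensor V σ) '' (L : Set (E ⊗[F] V)))) ≤ 1)
    (W : Submodule F V) :
    Submodule.span E (⇑(LinearMap.rTensor V σ) ''
        ((L ⊓ Submodule.span E ((fun v => (1 : E) ⊗ₜ[F] v) '' (W : Set V))) :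
          Set (E ⊗[F] V)))
      = L ⊓ Submodule.span E ((fun v => (1 : E) ⊗ₜ[F] v) '' (W : Set V)) ∨
    Submodule.span E (⇑(LinearMap.rTensor (V ⧸ W) σ) ''
        ((Submodule.map ((W.mkQ).baseChange E) L) : Set (E ⊗[F] (V ⧸ W))))
      = Submodule.map ((W.mkQ).baseChange E) L := by
  obtain ⟨σ, rfl⟩ : ∃ σ' : E →ₐ[F] E, σ'.toLinearMap = σ :=
    ⟨AlgHom.ofLinearMap σ (by rw [hσ, one_pow]) (fun x y => by rw [hσ, hσ, hσ, mul_pow]), rfl⟩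
  have hW : Submodule.span E ((fun v => (1 : E) ⊗ₜ[F] v) '' (W : Set V)) = W.baseChange E := by
    rw [Submodule.baseChange_eq_span, Submodule.map_coe]
    rfl
  have hdL : ToyShtuka.defect σ L ≤ 1 := hL
  have hsplit := ToyShtuka.defect_inf_add_defect_map_le σ W L
  rw [hW]
  by_cases h : ToyShtuka.defect σ (L ⊓ W.baseChange E) = 0
  · exact Or.inl (ToyShtuka.twist_eq_of_defect_eq_zero σ h :)
  · exact Or.inr (ToyShtuka.twist_eq_of_defect_eq_zero σ (by omega))
end

section
/- Let V be an 𝔽_q-vector space of finite dimension N ≥ 3 and let 1 ≤ n ≤ N−1. Let P_{V*} denote the set of codimension-1 subspaces (hyperplanes) of V and P_V the set of 1-dimensional subspaces (lines) of V. For functions λ : P_{V*} → ℚ and μ : P_V → ℚ, the following conditions are equivalent: (i) ∑_{J ∈ P_V} μ(J) = 0 and λ(H) = q^{n−(N−1)} · ∑_{J ∈ P_V, J ⊆ H} μ(J) for every H ∈ P_{V*}; (ii) ∑_{H ∈ P_{V*}} λ(H) = 0 and μ(J) = q^{1−n} · ∑_{H ∈ P_{V*}, H ⊇ J} λ(H)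 for every J ∈ P_V. -/
/-!
Write `[k]` for `1 + q + ⋯ + q^(k-1)`, the number of lines in a `k`-dimensional space. A line lies
in `[N-1]` hyperplanes and two distinct lines lie in `[N-2]` common hyperplanes (dually, via
annihilators, for lines inside hyperplanes), so applying the transform and then its transpose
sends `μ` to `q^(N-2) μ + [N-2] ∑ μ`, and symmetrically for the other composite. On functions of
total sum zero the two transforms are therefore mutually inverse up to the factor `q^(N-2)`, whose
inverse is the product of the two powers `q^(n-(N-1))` and `q^(1-n)`.
-/

open Module Finset

section Incidence

variable {α β R : Type*} (r : α → β → Prop)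

theorem sum_sum_filter_eq_sum_card_filter_mul [Semiring R] [∀ x y, Decidable (r x y)]
    (S : Finset α) (T : Finset β) (f : α → R) :
    ∑ y ∈ T, ∑ x ∈ S with r x y, f x = ∑ x ∈ S, (#{y ∈ T | r x y} : R) * f x := by
  simp only [sum_filter, card_filter]
  rw [sum_comm]
  push_cast
  simp only [sum_mul, ite_mul, one_mul, zero_mul]

theorem sum_eq_zero_and_eq_mul_sum_of_incidence_counts [CommSemiring R] [DecidableEq α]
    [∀ x y, Decidable (r x y)] {S : Finset α} {T : Finset β} {b e : ℕ}
    (hcount : ∀ x ∈ S, #{y ∈ T | r x y} = b + e)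
    (hcount₂ : ∀ x ∈ S, ∀ x' ∈ S, x ≠ x' → #{y ∈ T | r x y ∧ r x' y} = b)
    {c d : R} (hcde : d * c * e = 1) {μ : α → R} {ν : β → R} (hμ : ∑ x ∈ S, μ x = 0)
    (hν : ∀ y ∈ T, ν y = c * ∑ x ∈ S with r x y, μ x) :
    ∑ y ∈ T, ν y = 0 ∧ ∀ x ∈ S, μ x = d * ∑ y ∈ T with r x y, ν y := by
  refine ⟨?_, fun x₀ hx₀ => ?_⟩
  · rw [sum_congr rfl hν, ← mul_sum, sum_sum_filter_eq_sum_card_filter_mul,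
      sum_congr rfl fun x hx => by rw [hcount x hx], ← mul_sum, hμ, mul_zero, mul_zero]
  · have hpairs : ∑ x ∈ S, (#{y ∈ T | r x₀ y ∧ r x y} : R) * μ x = e * μ x₀ := by
      rw [← add_sum_erase S _ hx₀, sum_congr rfl fun x hx => by
        rw [hcount₂ x₀ hx₀ x (mem_of_mem_erase hx) (ne_of_mem_erase hx).symm], ← mul_sum]
      calc _ = e * μ x₀ + b * (μ x₀ + ∑ x ∈ S.erase x₀, μ x) := by
            simp only [and_self, hcount x₀ hx₀]; push_cast; ring
        _ = e * μ x₀ := by rw [add_sum_erase S μ hx₀, hμ, mul_zero, add_zero]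
    calc μ x₀ = d * c * e * μ x₀ := by rw [hcde, one_mul]
      _ = d * (c * ∑ x ∈ S, (#{y ∈ {y ∈ T | r x₀ y} | r x y} : R) * μ x) := by
        simp only [filter_filter]; rw [hpairs]; ring
      _ = d * ∑ y ∈ T with r x₀ y, ν y := by
        rw [← sum_sum_filter_eq_sum_card_filter_mul, mul_sum]
        exact congrArg _ (sum_congr rfl fun y hy => (hν y (mem_of_mem_filter y hy)).symm)

theorem finsum_mem_eq_zero_and_eq_mul_finsum_mem_of_incidence_counts [CommSemiring R]
    {S : Set α} {T : Set β} (hS : S.Finite) (hT : T.Finite) {b e : ℕ}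
    (hcount : ∀ x ∈ S, {y | y ∈ T ∧ r x y}.ncard = b + e)
    (hcount₂ : ∀ x ∈ S, ∀ x' ∈ S, x ≠ x' → {y | y ∈ T ∧ r x y ∧ r x' y}.ncard = b)
    {c d : R} (hcde : d * c * e = 1) {μ : α → R} {ν : β → R} (hμ : ∑ᶠ x ∈ S, μ x = 0)
    (hν : ∀ y ∈ T, ν y = c * ∑ᶠ x ∈ {x | x ∈ S ∧ r x y}, μ x) :
    ∑ᶠ y ∈ T, ν y = 0 ∧ ∀ x ∈ S, μ x = d * ∑ᶠ y ∈ {y | y ∈ T ∧ r x y}, ν y := by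
  classical
  lift S to Finset α using hS
  lift T to Finset β using hT
  simp only [Finset.mem_coe, ← Finset.coe_filter, finsum_mem_finset_eq_sum,
    Set.ncard_coe_finset] at *
  exact sum_eq_zero_and_eq_mul_sum_of_incidence_counts r hcount hcount₂ hcde hμ hν

end Incidence

section Subspaces

variable {K V : Type*} [Field K] [AddCommGroup V] [Module K V]

theorem finrank_sup_eq_two_of_ne [FiniteDimensional K V] {J J' : Submodule K V}
    (hJ : finrank K J = 1) (hJ' : finrank K J' = 1) (hne : J ≠ J') :
    finrank K ↥(J ⊔ J') = 2 := by
  have hlt : J ⊓ J' < J := inf_lt_left.2 fun hle =>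
    hne (Submodule.eq_of_le_of_finrank_eq hle (hJ.trans hJ'.symm))
  have := Submodule.finrank_lt_finrank_of_lt hlt
  have := Submodule.finrank_sup_add_finrank_inf_eq J J'
  omega

theorem finrank_inf_eq_sub_two_of_ne [FiniteDimensional K V] {H H' : Submodule K V}
    (hH : finrank K H = finrank K V - 1) (hH' : finrank K H' = finrank K V - 1) (hne : H ≠ H') :
    finrank K ↥(H ⊓ H') = finrank K V - 2 := by
  have hlt : H < H ⊔ H' := left_lt_sup.2 fun hle =>
    hne (Submodule.eq_of_le_of_finrank_eq hle (hH'.trans hH.symm)).symm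
  have := Submodule.finrank_lt_finrank_of_lt hlt
  have := Submodule.finrank_le (H ⊔ H')
  have := Submodule.finrank_sup_add_finrank_inf_eq H H'
  omega

variable [Finite K]

theorem ncard_lines_le (W : Submodule K V) :
    {J : Submodule K V | finrank K J = 1 ∧ J ≤ W}.ncard =
      ∑ i ∈ range (finrank K W), Nat.card K ^ i := by
  have himage : {J : Submodule K V | finrank K J = 1 ∧ J ≤ W} =
      Submodule.map W.subtype '' {J | finrank K J = 1} := by
    ext J
    constructor
    · rintro ⟨hJ, hJW⟩
      have hmap : Submodule.map W.subtype (Submodule.comap W.subtype J) = J := by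
        rw [Submodule.map_comap_subtype, inf_eq_right.2 hJW]
      refine ⟨_, ?_, hmap⟩
      show finrank K _ = 1
      rwa [← Submodule.finrank_map_subtype_eq, hmap]
    · rintro ⟨J, hJ, rfl⟩
      exact ⟨(Submodule.finrank_map_subtype_eq W J).trans hJ, Submodule.map_subtype_le W J⟩
  rw [himage, Set.ncard_image_of_injective _
    (Submodule.map_injective_of_injective W.injective_subtype),
    ← Projectivization.card_of_finrank K W rfl, ← Nat.card_coe_set_eq]
  exact Nat.card_congr (Projectivization.equivSubmodule K W).symm

theorem ncard_hyperplanes_ge [FiniteDimensional K V] (hV : 0 < finrank K V)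
    (W : Submodule K V) :
    {H : Submodule K V | finrank K H = finrank K V - 1 ∧ W ≤ H}.ncard =
      ∑ i ∈ range (finrank K V - finrank K W), Nat.card K ^ i := by
  have hpre : {H : Submodule K V | finrank K H = finrank K V - 1 ∧ W ≤ H} =
      Submodule.dualAnnihilator ⁻¹' {L | finrank K L = 1 ∧ L ≤ W.dualAnnihilator} := by
    ext H
    have := Subspace.finrank_add_finrank_dualAnnihilator_eq H
    simp only [Set.mem_ofPred_eq, Set.mem_preimage,
      Subspace.dualAnnihilator_le_dualAnnihilator_iff]
    exact and_congr_left' ⟨fun h => by omega, fun h => by omega⟩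
  have := Subspace.finrank_add_finrank_dualAnnihilator_eq W
  rw [hpre, Set.ncard_preimage_of_injective_subset_range
    (fun _ _ => Subspace.dualAnnihilator_inj.1)
    fun L _ => ⟨_, Subspace.dualCoannihilator_dualAnnihilator_eq⟩, ncard_lines_le]
  congr 2
  omega

theorem ncard_hyperplanes_ge_two_lines [FiniteDimensional K V] (hV : 0 < finrank K V)
    {J J' : Submodule K V} (hJ : finrank K J = 1) (hJ' : finrank K J' = 1) (hne : J ≠ J') :
    {H : Submodule K V | finrank K H = finrank K V - 1 ∧ J ≤ H ∧ J' ≤ H}.ncard =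
      ∑ i ∈ range (finrank K V - 2), Nat.card K ^ i := by
  simp only [← sup_le_iff]
  rw [ncard_hyperplanes_ge hV, finrank_sup_eq_two_of_ne hJ hJ' hne]

theorem ncard_lines_le_two_hyperplanes [FiniteDimensional K V] {H H' : Submodule K V}
    (hH : finrank K H = finrank K V - 1) (hH' : finrank K H' = finrank K V - 1) (hne : H ≠ H') :
    {J : Submodule K V | finrank K J = 1 ∧ J ≤ H ∧ J ≤ H'}.ncard =
      ∑ i ∈ range (finrank K V - 2), Nat.card K ^ i := by
  simp only [← le_inf_iff]
  rw [ncard_lines_le, finrank_inf_eq_sub_two_of_ne hH hH' hne]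

end Subspaces

theorem radon_transform_inversion_general
    {F : Type*} [Field F] [Fintype F]
    {V : Type*} [AddCommGroup V] [Module F V]
    (N n : ℕ) (hNV : finrank F V = N) (hN : 3 ≤ N)
    (lam mu : Submodule F V → ℚ) :
    ((∑ᶠ J ∈ {J : Submodule F V | finrank F ↥J = 1}, mu J) = 0 ∧
      ∀ H : Submodule F V, finrank F ↥H = N - 1 →
        lam H = (Fintype.card F : ℚ) ^ ((n : ℤ) - ((N : ℤ) - 1)) *
          ∑ᶠ J ∈ {J : Submodule F V | finrank F ↥J = 1 ∧ J ≤ H}, mu J)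
    ↔
    ((∑ᶠ H ∈ {H : Submodule F V | finrank F ↥H = N - 1}, lam H) = 0 ∧
      ∀ J : Submodule F V, finrank F ↥J = 1 →
        mu J = (Fintype.card F : ℚ) ^ ((1 : ℤ) - (n : ℤ)) *
          ∑ᶠ H ∈ {H : Submodule F V | finrank F ↥H = N - 1 ∧ J ≤ H}, lam H) := by
  subst hNV
  rw [← Nat.card_eq_fintype_card]
  have hV : 0 < finrank F V := by omega
  have : FiniteDimensional F V := Module.finite_of_finrank_pos hV
  have : Finite V := Module.finite_of_finite F
  have hgeom : ∑ i ∈ range (finrank F V - 1), Nat.card F ^ i =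
      ∑ i ∈ range (finrank F V - 2), Nat.card F ^ i + Nat.card F ^ (finrank F V - 2) := by
    rw [← sum_range_succ, show finrank F V - 2 + 1 = finrank F V - 1 by omega]
  have hexp : (Nat.card F : ℚ) ^ ((1 : ℤ) - n) *
      (Nat.card F : ℚ) ^ ((n : ℤ) - (finrank F V - 1)) *
      ((Nat.card F ^ (finrank F V - 2) : ℕ) : ℚ) = 1 := by
    have hq : (Nat.card F : ℚ) ≠ 0 := Nat.cast_ne_zero.2 Nat.card_pos.ne'
    rw [Nat.cast_pow, ← zpow_natCast, ← zpow_add₀ hq, ← zpow_add₀ hq]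
    convert zpow_zero (Nat.card F : ℚ)
    omega
  refine ⟨fun ⟨hmu, hlam⟩ => ?_, fun ⟨hlam, hmu⟩ => ?_⟩
  · refine finsum_mem_eq_zero_and_eq_mul_finsum_mem_of_incidence_counts (· ≤ ·)
      (b := ∑ i ∈ range (finrank F V - 2), Nat.card F ^ i) (Set.toFinite _) (Set.toFinite _)
      (fun J hJ => ?_) (fun J hJ J' hJ' hne => ?_) hexp hmu hlam
    · exact (ncard_hyperplanes_ge hV J).trans (by rw [show finrank F J = 1 from hJ, hgeom])
    · exact ncard_hyperplanes_ge_two_lines hV hJ hJ' hne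
  · refine finsum_mem_eq_zero_and_eq_mul_finsum_mem_of_incidence_counts (fun H J => J ≤ H)
      (b := ∑ i ∈ range (finrank F V - 2), Nat.card F ^ i) (Set.toFinite _) (Set.toFinite _)
      (fun H hH => ?_) (fun H hH H' hH' hne => ?_) (by rw [← hexp]; ring) hlam hmu
    · exact (ncard_lines_le H).trans (by rw [show finrank F H = _ from hH, hgeom])
    · exact ncard_lines_le_two_hyperplanes hH hH' hne

/-- Inversion for the finite Radon transform between lines and hyperplanes of a
finite-dimensional vector space over `𝔽_q`. -/
theorem radon_transform_inversion
    {F : Type*} [Field F] [Fintype F]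
    {V : Type*} [AddCommGroup V] [Module F V] [FiniteDimensional F V]
    (N n : ℕ) (hNV : finrank F V = N) (hN : 3 ≤ N) (hn1 : 1 ≤ n) (hnN : n ≤ N - 1)
    (lam mu : Submodule F V → ℚ) :
    ((∑ᶠ J ∈ {J : Submodule F V | finrank F ↥J = 1}, mu J) = 0 ∧
      ∀ H : Submodule F V, finrank F ↥H = N - 1 →
        lam H = (Fintype.card F : ℚ) ^ ((n : ℤ) - ((N : ℤ) - 1)) *
          ∑ᶠ J ∈ {J : Submodule F V | finrank F ↥J = 1 ∧ J ≤ H}, mu J)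
    ↔
    ((∑ᶠ H ∈ {H : Submodule F V | finrank F ↥H = N - 1}, lam H) = 0 ∧
      ∀ J : Submodule F V, finrank F ↥J = 1 →
        mu J = (Fintype.card F : ℚ) ^ ((1 : ℤ) - (n : ℤ)) *
          ∑ᶠ H ∈ {H : Submodule F V | finrank F ↥H = N - 1 ∧ J ≤ H}, lam H) :=
  radon_transform_inversion_general N n hNV hN lam mu
end

section
/- Let E be a field containing 𝔽_q, σ : E → E the q-power Frobenius, V a finite-dimensional 𝔽_q-vector space, and τ = id_V ⊗ σ the σ-semilinear endomorphism of V ⊗_{𝔽_q} E. If L ⊆ V ⊗ E is an E-subspace with τ*L = L (where τ*L is the E-span of τ(L)), then L = M ⊗_{𝔽_q} E for a unique 𝔽_q-subspace M ⊆ V, namely M = L ∩ (V ⊗ 1). -/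
/-!
The fixed points of `id ⊗ σ` on `E ⊗ W` are exactly `1 ⊗ W`: the fixed field of `x ↦ x ^ q` is
`𝔽_q`, and tensoring with `W` keeps `F → E → E` (the second map `σ - id`) exact. Hence a nonzero
Frobenius-stable `L` contains a nonzero `1 ⊗ w`: normalise an element of `L` of minimal support
in a basis so that one coordinate is `1`; then `σ x - x ∈ L` has smaller support, so it vanishes.
With `M = {v | 1 ⊗ v ∈ L}`, the image of `L` in `E ⊗ (V ⧸ M)` is Frobenius-stable and contains no
such vector, so it is zero and `L ⊆ M ⊗ E`. Uniqueness of `M` is faithful flatness of `E / 𝔽_q`.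
-/

open TensorProduct Module

open Polynomial in
theorem FiniteField.mem_range_algebraMap_of_pow_card_eq_self {F E : Type*} [Field F] [Fintype F]
    [Field E] [Algebra F E] {x : E} (hx : x ^ Fintype.card F = x) :
    x ∈ (algebraMap F E).range := by
  have hq := Fintype.one_lt_card (α := F)
  have hroots := roots_map_of_injective_of_card_eq_natDegree (algebraMap F E).injective
    (p := X ^ Fintype.card F - X) (by
      rw [roots_X_pow_card_sub_X, X_pow_card_sub_X_natDegree_eq F hq]; rfl)
  have hxroot : x ∈ ((X ^ Fintype.card F - X : F[X]).map (algebraMap F E)).roots := by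
    rw [Polynomial.map_sub, Polynomial.map_pow, map_X,
      mem_roots (X_pow_card_sub_X_ne_zero E hq)]
    simp [hx]
  rw [← hroots, roots_X_pow_card_sub_X] at hxroot
  obtain ⟨a, -, rfl⟩ := Multiset.mem_map.mp hxroot
  exact ⟨a, rfl⟩

namespace Submodule

variable {R A M : Type*} [CommRing R] [Ring A] [Algebra R A] [AddCommGroup M] [Module R M]

theorem one_tmul_mem_baseChange_iff [FaithfullyFlat R A] {p : Submodule R M} {m : M} :
    (1 : A) ⊗ₜ[R] m ∈ p.baseChange A ↔ m ∈ p := by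
  rw [← span_singleton_le_iff_mem, ← span_singleton_le_iff_mem (R := R),
    ← baseChange_le_iff (A := A), baseChange_span, Set.image_singleton, TensorProduct.mk_apply]

theorem span_one_tmul_image_eq_baseChange (p : Submodule R M) :
    span A ((fun m => (1 : A) ⊗ₜ[R] m) '' (p : Set M)) = p.baseChange A := by
  rw [baseChange_eq_span, map_coe]; rfl

theorem ker_baseChange_mkQ (p : Submodule R M) :
    LinearMap.ker (p.mkQ.baseChange A) = p.baseChange A := by
  apply restrictScalars_injective R
  exact _root_.lTensor_mkQ A p

end Submodule

section Descent

variable {F E : Type*} [Field F] [Field E] [Algebra F E] (σ : E →ₗ[F] E)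
variable {W : Type*} [AddCommGroup W] [Module F W]

theorem Module.Basis.baseChange_repr_rTensor {ι : Type*} (b : Basis ι F W) (x : E ⊗[F] W)
    (i : ι) :
    (b.baseChange E).repr (σ.rTensor W x) i = σ ((b.baseChange E).repr x i) := by
  induction x using TensorProduct.induction_on with
  | zero => simp
  | tmul e w => simp
  | add x y hx hy => simp [hx, hy]

theorem exists_one_tmul_eq_of_rTensor_eq_self (hσ1 : σ 1 = 1)
    (hfix : ∀ e, σ e = e → e ∈ (algebraMap F E).range) {x : E ⊗[F] W}
    (hx : σ.rTensor W x = x) : ∃ w : W, (1 : E) ⊗ₜ[F] w = x := by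
  have hexact : Function.Exact (Algebra.linearMap F E) (σ - LinearMap.id : E →ₗ[F] E) := by
    intro e
    simp only [LinearMap.sub_apply, LinearMap.id_apply, sub_eq_zero, Set.mem_range,
      Algebra.linearMap_apply]
    refine ⟨hfix e, ?_⟩
    rintro ⟨a, rfl⟩
    rw [Algebra.algebraMap_eq_smul_one, map_smul, hσ1]
  obtain ⟨y, rfl⟩ := (Module.Flat.rTensor_exact W hexact x).mp (by
    rw [LinearMap.rTensor_sub, LinearMap.rTensor_id, LinearMap.sub_apply, hx,
      LinearMap.id_apply, sub_self])
  have hincl : TensorProduct.mk F E W 1 ∘ₗ TensorProduct.lid F W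
      = (Algebra.linearMap F E).rTensor W := by
    ext w
    simp
  exact ⟨TensorProduct.lid F W y, LinearMap.congr_fun hincl y⟩

theorem Module.Basis.support_repr_rTensor_sub_ssubset (hσ1 : σ 1 = 1) {ι : Type*}
    (b : Basis ι F W) {y : E ⊗[F] W} {i : ι} (hi : (b.baseChange E).repr y i = 1) :
    ((b.baseChange E).repr (σ.rTensor W y - y)).support ⊂ ((b.baseChange E).repr y).support := by
  rw [Finset.ssubset_iff_of_subset]
  · refine ⟨i, by simp [hi], ?_⟩
    simp [b.baseChange_repr_rTensor, hi, hσ1]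
  · intro j
    simp only [Finsupp.mem_support_iff, map_sub, Finsupp.sub_apply, b.baseChange_repr_rTensor]
    exact mt fun h => by rw [h, map_zero, sub_zero]

theorem exists_ne_zero_one_tmul_mem_of_rTensor_mem (hσ1 : σ 1 = 1)
    (hfix : ∀ e, σ e = e → e ∈ (algebraMap F E).range) {L : Submodule E (E ⊗[F] W)}
    (hL : ∀ x ∈ L, σ.rTensor W x ∈ L) (hne : L ≠ ⊥) :
    ∃ w : W, w ≠ 0 ∧ (1 : E) ⊗ₜ[F] w ∈ L := by
  let B := (Basis.ofVectorSpace F W).baseChange E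
  obtain ⟨x, hxL, hx0⟩ := Submodule.exists_mem_ne_zero_of_ne_bot hne
  induction hn : (B.repr x).support.card using Nat.strong_induction_on generalizing x with
  | _ n ih =>
  obtain ⟨i, hi⟩ : ∃ i, B.repr x i ≠ 0 := by
    by_contra! h
    exact hx0 (B.repr.map_eq_zero_iff.mp (Finsupp.ext h))
  set y := (B.repr x i)⁻¹ • x
  have hyL : y ∈ L := L.smul_mem _ hxL
  have hyi : B.repr y i = 1 := by simp [y, hi]
  have hzL : σ.rTensor W y - y ∈ L := L.sub_mem (hL y hyL) hyL
  by_cases hz : σ.rTensor W y - y = 0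
  · obtain ⟨w, hw⟩ := exists_one_tmul_eq_of_rTensor_eq_self σ hσ1 hfix (sub_eq_zero.mp hz)
    refine ⟨w, ?_, hw ▸ hyL⟩
    rintro rfl
    simp [← hw] at hyi
  · refine ih _ ?_ _ hzL hz rfl
    calc (B.repr (σ.rTensor W y - y)).support.card < (B.repr y).support.card :=
          Finset.card_lt_card <|
            (Basis.ofVectorSpace F W).support_repr_rTensor_sub_ssubset σ hσ1 hyi
      _ = n := by rw [← hn, map_smul, Finsupp.support_smul_eq (inv_ne_zero hi)]

theorem baseChange_comap_mk_one_eq_of_rTensor_mem (hσ1 : σ 1 = 1)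
    (hfix : ∀ e, σ e = e → e ∈ (algebraMap F E).range) {L : Submodule E (E ⊗[F] W)}
    (hL : ∀ x ∈ L, σ.rTensor W x ∈ L) :
    ((L.restrictScalars F).comap (TensorProduct.mk F E W 1)).baseChange E = L := by
  set M := (L.restrictScalars F).comap (TensorProduct.mk F E W 1)
  have hle : M.baseChange E ≤ L := by
    rw [Submodule.baseChange_eq_span, Submodule.span_le]
    rintro _ ⟨v, hv, rfl⟩
    exact hv
  refine le_antisymm hle ?_
  let π := M.mkQ.baseChange E
  have hπσ : ∀ x, σ.rTensor (W ⧸ M) (π x) = π (σ.rTensor W x) := fun x =>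
    LinearMap.congr_fun ((LinearMap.rTensor_comp_lTensor (f := σ) (g := M.mkQ)).trans
      (LinearMap.lTensor_comp_rTensor (f := σ) (g := M.mkQ)).symm) x
  suffices L.map π = ⊥ by
    rwa [← LinearMap.le_ker_iff_map, Submodule.ker_baseChange_mkQ] at this
  by_contra hne
  obtain ⟨w, hw0, x, hxL, hx⟩ := exists_ne_zero_one_tmul_mem_of_rTensor_mem σ hσ1 hfix
    (by rintro _ ⟨x, hx, rfl⟩; exact ⟨_, hL x hx, (hπσ x).symm⟩) hne
  obtain ⟨v, rfl⟩ := M.mkQ_surjective w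
  have hdiff : (1 : E) ⊗ₜ[F] v - x ∈ M.baseChange E := by
    rw [← Submodule.ker_baseChange_mkQ, LinearMap.mem_ker, map_sub, hx, sub_eq_zero]
    rfl
  have hv : (1 : E) ⊗ₜ[F] v ∈ L := by simpa using L.add_mem (hle hdiff) hxL
  exact hw0 ((Submodule.Quotient.mk_eq_zero M).mpr hv)

end Descent

theorem frobenius_stable_descent_general
    {F E : Type*} [Field F] [Fintype F] [Field E] [Algebra F E]
    {V : Type*} [AddCommGroup V] [Module F V]
    (σ : E →ₗ[F] E) (hσ : ∀ x : E, σ x = x ^ Fintype.card F)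
    (L : Submodule E (E ⊗[F] V))
    (hL : Submodule.span E (⇑(LinearMap.rTensor V σ) '' (L : Set (E ⊗[F] V))) = L) :
    (∃! M : Submodule F V,
        Submodule.span E ((fun v => (1 : E) ⊗ₜ[F] v) '' (M : Set V)) = L) ∧
    (∀ M : Submodule F V,
        Submodule.span E ((fun v => (1 : E) ⊗ₜ[F] v) '' (M : Set V)) = L →
        (M : Set V) = {v : V | (1 : E) ⊗ₜ[F] v ∈ L}) := by
  simp only [Submodule.span_one_tmul_image_eq_baseChange]
  have hσ1 : σ 1 = 1 := by rw [hσ, one_pow]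
  have hfix : ∀ e, σ e = e → e ∈ (algebraMap F E).range := fun e he =>
    FiniteField.mem_range_algebraMap_of_pow_card_eq_self (hσ e ▸ he)
  have hdescent := baseChange_comap_mk_one_eq_of_rTensor_mem σ hσ1 hfix (L := L)
    fun x hx => hL ▸ Submodule.subset_span ⟨x, hx, rfl⟩
  refine ⟨⟨_, hdescent, fun M hM => Submodule.baseChange_injective (hM.trans hdescent.symm)⟩, ?_⟩
  rintro M rfl
  ext v
  exact Submodule.one_tmul_mem_baseChange_iff.symm

/-- Semilinear Galois descent: a Frobenius-stable `E`-subspace `L ⊆ V ⊗ E` is the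
base change of a unique `𝔽_q`-subspace `M ⊆ V`, namely `M = L ∩ (V ⊗ 1)`. -/
theorem frobenius_stable_descent
    {F E : Type*} [Field F] [Fintype F] [Field E] [Algebra F E]
    {V : Type*} [AddCommGroup V] [Module F V] [FiniteDimensional F V]
    (σ : E →ₗ[F] E) (hσ : ∀ x : E, σ x = x ^ Fintype.card F)
    (L : Submodule E (E ⊗[F] V))
    (hL : Submodule.span E (⇑(LinearMap.rTensor V σ) '' (L : Set (E ⊗[F] V))) = L) :
    (∃! M : Submodule F V,
        Submodule.span E ((fun v => (1 : E) ⊗ₜ[F] v) '' (M : Set V)) = L) ∧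
    (∀ M : Submodule F V,
        Submodule.span E ((fun v => (1 : E) ⊗ₜ[F] v) '' (M : Set V)) = L →
        (M : Set V) = {v : V | (1 : E) ⊗ₜ[F] v ∈ L}) :=
  frobenius_stable_descent_general σ hσ L hL
end

section
/- Let (A_i)_{i ∈ I} be a directed system of commutative rings indexed by a directed set I, where each A_i is a discrete valuation ring, all transition maps A_i → A_j are injective local ring homomorphisms, and there is a fixed element π such that (the image of) π is a uniformizer of every A_i. Then the colimit A = colim_i A_i is a discrete valuation ring with uniformizer (the image of) π. -/
/-!
Every element of `A` lies in some `R i`, and any two lie in a common one. Hence a relation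
`a * b = 0` or `π = a * b` in `A` already holds in a domain `R k`, and an inverse of `π` in `A`
would be an inverse in some `R k`; so `A` is a domain in which `π` is irreducible. Each nonzero
`x ∈ R i` is `u * π ^ n` with `u` a unit of `R i`, hence of `A`, which makes `A` a discrete
valuation ring.
-/

namespace Subring

variable {A ι : Type*} [CommRing A] {R : ι → Subring A}

section Directed

variable [Preorder ι] [IsDirected ι (· ≤ ·)]

theorem exists_mem_mem_of_directed (hR : Monotone R) (hcover : ∀ a, ∃ i, a ∈ R i) (a b : A) :
    ∃ k, a ∈ R k ∧ b ∈ R k := by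
  obtain ⟨i, hi⟩ := hcover a
  obtain ⟨j, hj⟩ := hcover b
  obtain ⟨k, hik, hjk⟩ := directed_of (· ≤ ·) i j
  exact ⟨k, hR hik hi, hR hjk hj⟩

theorem isDomain_of_directed_cover [Nonempty ι] [∀ i, IsDomain (R i)] (hR : Monotone R)
    (hcover : ∀ a, ∃ i, a ∈ R i) : IsDomain A := by
  have : Nontrivial A := Subtype.val_injective.nontrivial (α := R (Classical.arbitrary ι))
  have : NoZeroDivisors A := by
    refine ⟨fun {a b} hab => ?_⟩
    obtain ⟨k, ha, hb⟩ := exists_mem_mem_of_directed hR hcover a b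
    have hab' : (⟨a, ha⟩ : R k) * ⟨b, hb⟩ = 0 := Subtype.ext hab
    simpa [Subtype.ext_iff] using mul_eq_zero.mp hab'
  exact NoZeroDivisors.to_isDomain A

theorem exists_isUnit_mk_of_isUnit (hR : Monotone R) (hcover : ∀ a, ∃ i, a ∈ R i) {a : A}
    (ha : IsUnit a) : ∃ k, ∃ h : a ∈ R k, IsUnit (⟨a, h⟩ : R k) := by
  obtain ⟨u, rfl⟩ := ha
  obtain ⟨k, hu, hv⟩ := exists_mem_mem_of_directed hR hcover u ↑u⁻¹
  exact ⟨k, hu, IsUnit.of_mul_eq_one (⟨_, hv⟩ : R k) (Subtype.ext u.mul_inv)⟩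

theorem irreducible_of_directed_cover (hR : Monotone R) (hcover : ∀ a, ∃ i, a ∈ R i) {π : A}
    (hπ : ∀ i, π ∈ R i) (hirr : ∀ i, Irreducible (⟨π, hπ i⟩ : R i)) : Irreducible π := by
  refine ⟨fun hunit => ?_, fun a b hab => ?_⟩
  · obtain ⟨k, _, hk⟩ := exists_isUnit_mk_of_isUnit hR hcover hunit
    exact (hirr k).not_isUnit hk
  · obtain ⟨k, ha, hb⟩ := exists_mem_mem_of_directed hR hcover a b
    have hab' : (⟨π, hπ k⟩ : R k) = ⟨a, ha⟩ * ⟨b, hb⟩ := Subtype.ext hab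
    exact ((hirr k).isUnit_or_isUnit hab').imp
      (IsUnit.map (R k).subtype) (IsUnit.map (R k).subtype)

end Directed

theorem isDiscreteValuationRing_of_cover [IsDomain A] [∀ i, IsDomain (R i)]
    [∀ i, IsDiscreteValuationRing (R i)] (hcover : ∀ a, ∃ i, a ∈ R i) {π : A}
    (hπ : ∀ i, π ∈ R i) (hirr : ∀ i, Irreducible (⟨π, hπ i⟩ : R i)) (hπA : Irreducible π) :
    IsDiscreteValuationRing A := by
  refine .ofHasUnitMulPowIrreducibleFactorization ⟨π, hπA, fun {x} hx => ?_⟩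
  obtain ⟨i, hi⟩ := hcover x
  have hx' : (⟨x, hi⟩ : R i) ≠ 0 := fun h => hx (congrArg Subtype.val h)
  obtain ⟨n, u, hu⟩ := IsDiscreteValuationRing.eq_unit_mul_pow_irreducible hx' (hirr i)
  refine ⟨n, Units.map (R i).subtype u, ?_⟩
  simpa [mul_comm] using (congrArg Subtype.val hu).symm

end Subring

open Subring in
theorem directed_union_of_dvr_is_dvr_general
    {A : Type*} [CommRing A] {ι : Type*} [Preorder ι] [IsDirected ι (· ≤ ·)] [Nonempty ι]
    (R : ι → Subring A) (hmono : ∀ i j, i ≤ j → R i ≤ R j)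
    (hunion : ∀ a : A, ∃ i, a ∈ R i)
    (hdom : ∀ i, IsDomain (R i))
    (hdvr : ∀ i, @IsDiscreteValuationRing (R i) _ (hdom i))
    (π : A) (hπ : ∀ i, π ∈ R i)
    (hunif : ∀ i, Irreducible (⟨π, hπ i⟩ : R i)) :
    ∃ h : IsDomain A, @IsDiscreteValuationRing A _ h ∧ Irreducible π := by
  have hR : Monotone R := fun i j => hmono i j
  have hA := isDomain_of_directed_cover hR hunion
  have hπA := irreducible_of_directed_cover hR hunion hπ hunif
  exact ⟨hA, isDiscreteValuationRing_of_cover hunion hπ hunif hπA, hπA⟩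

/-- A filtered inductive limit (here: directed union) of discrete valuation rings with a
common uniformizer, along injective local transition maps, is a discrete valuation ring
with the same uniformizer. -/
theorem directed_union_of_dvr_is_dvr
    {A : Type*} [CommRing A] {ι : Type*} [Preorder ι] [IsDirected ι (· ≤ ·)] [Nonempty ι]
    (R : ι → Subring A) (hmono : ∀ i j, i ≤ j → R i ≤ R j)
    (hunion : ∀ a : A, ∃ i, a ∈ R i)
    (hdom : ∀ i, IsDomain (R i))
    (hdvr : ∀ i, @IsDiscreteValuationRing (R i) _ (hdom i))
    (π : A) (hπ : ∀ i, π ∈ R i)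
    (hunif : ∀ i, Irreducible (⟨π, hπ i⟩ : R i))
    (hlocal : ∀ i j (hij : i ≤ j) (x : R i),
      IsUnit (Subring.inclusion (hmono i j hij) x) → IsUnit x) :
    ∃ h : IsDomain A, @IsDiscreteValuationRing A _ h ∧ Irreducible π :=
  directed_union_of_dvr_is_dvr_general R hmono hunion hdom hdvr π hπ hunif
end

section
/- Let A be a commutative local ring and ψ : M → N a homomorphism between finitely generated free A-modules, with rank N = e. Then ψ has strictly constant rank r (meaning the induced map Λ^{r+1} ψ : Λ^{r+1} M → Λ^{r+1} N is zero and Λ^r ψ is nonzero after base change to the residue field of A — equivalently Λ^r ψ has a unit coefficient) if and only if coker ψ is a free A-module of rank e − r. -/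
/-!
Both sides are equivalent to `P = Q * R` through `A^r` with `T * Q = 1` and `R * S = 1` for some
`T`, `S`. If `P[f, g]` is an invertible `r × r` minor and all bordered `(r+1)`-minors vanish, their
Schur complements vanish, i.e. `P = P[:, g] * P[f, g]⁻¹ * P[f, :]`. Conversely, the
`(r+1)`-minors of `Q * R` factor through `A^r`, and expanding `det (T * P * S) = 1` along rows
(half of Cauchy–Binet) produces a unit `r`-minor, since a sum of non-units in a local ring is a
non-unit. On the module side a split factorization identifies `coker P` with a complement of `A^r`
in `A^e`, and a free cokernel splits `range P` off `A^e`; either way the complement is finite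
projective, hence free over the local ring, and its rank is read off `A^e`.
-/

open Matrix

theorem exists_linearEquiv_fin_of_linearEquiv_prod {A N M : Type*} [CommRing A] [IsLocalRing A]
    [AddCommGroup N] [Module A N] [Module.Free A N] [Module.Finite A N]
    [AddCommGroup M] [Module A M] {r : ℕ} (h : N ≃ₗ[A] (Fin r → A) × M) :
    ∃ s, r + s = Module.finrank A N ∧ Nonempty (M ≃ₗ[A] (Fin s → A)) := by
  have hsplit : (LinearMap.snd A _ M ∘ₗ h.toLinearMap) ∘ₗ
      (h.symm.toLinearMap ∘ₗ LinearMap.inr A _ M) = LinearMap.id := by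
    ext; simp
  have : Module.Finite A M :=
    Module.Finite.of_surjective (LinearMap.snd A _ M ∘ₗ h.toLinearMap)
      fun m => ⟨h.symm (0, m), by simp⟩
  have : Module.Projective A M := .of_split (M := N) _ _ hsplit
  have : Module.Free A M := Module.free_of_flat_of_isLocalRing
  refine ⟨Module.finrank A M, ?_, ⟨(Module.finBasis A M).equivFun⟩⟩
  rw [h.finrank_eq, Module.finrank_prod, Module.finrank_fin_fun]

namespace Matrix

variable {A : Type*} [CommRing A]

section DetMul

variable {n ι : Type*} [Fintype n] [DecidableEq n] [Fintype ι]

theorem det_mul_eq_sum_prod_mul_det_submatrix (M : Matrix n ι A) (N : Matrix ι n A) :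
    (M * N).det = ∑ f : n → ι, (∏ i, M i (f i)) * (N.submatrix f id).det := by
  have hrows : (M * N).det = detRowAlternating (fun i => ∑ j, M i j • N j) := by
    congr 1
    ext i x
    simp [mul_apply]
  refine hrows.trans <| (detRowAlternating.toMultilinearMap.map_sum
    fun i j => M i j • N j).trans <| Finset.sum_congr rfl fun f _ => ?_
  exact (detRowAlternating.toMultilinearMap.map_smul_univ _ _).trans (smul_eq_mul _ _)

theorem det_mul_eq_zero_of_card_lt (M : Matrix n ι A) (N : Matrix ι n A)
    (h : Fintype.card ι < Fintype.card n) : (M * N).det = 0 := by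
  rw [det_mul_eq_sum_prod_mul_det_submatrix]
  refine Finset.sum_eq_zero fun f _ => ?_
  obtain ⟨i, j, hij, hf⟩ := Fintype.exists_ne_map_eq_of_card_lt f h
  rw [det_zero_of_row_eq hij (funext fun k => by simp [hf]), mul_zero]

variable [IsLocalRing A]

theorem exists_isUnit_det_submatrix_right {M : Matrix n ι A} {N : Matrix ι n A}
    (h : IsUnit (M * N).det) : ∃ f : n → ι, IsUnit (N.submatrix f id).det := by
  rw [det_mul_eq_sum_prod_mul_det_submatrix] at h
  obtain ⟨f, -, hf⟩ := IsLocalRing.exists_of_isUnit_sum h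
  exact ⟨f, isUnit_of_mul_isUnit_right hf⟩

theorem exists_isUnit_det_submatrix_left {M : Matrix n ι A} {N : Matrix ι n A}
    (h : IsUnit (M * N).det) : ∃ g : n → ι, IsUnit (M.submatrix id g).det := by
  rw [← det_transpose, transpose_mul] at h
  obtain ⟨g, hg⟩ := exists_isUnit_det_submatrix_right h
  exact ⟨g, by rwa [← det_transpose]⟩

end DetMul

variable {ι κ : Type*} {P : Matrix ι κ A} {r : ℕ}

theorem eq_mul_inv_mul_of_isUnit_det_submatrix
    (hv : ∀ (f : Fin (r + 1) → ι) (g : Fin (r + 1) → κ), (P.submatrix f g).det = 0)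
    {f : Fin r → ι} {g : Fin r → κ} (hu : IsUnit (P.submatrix f g).det) :
    P = P.submatrix id g * (P.submatrix f g)⁻¹ * P.submatrix f id := by
  set B := P.submatrix f g
  have : Invertible B := B.invertibleOfIsUnitDet hu
  ext i j
  have hborder : (P.submatrix (Sum.elim f fun _ : Fin 1 => i)
      (Sum.elim g fun _ : Fin 1 => j)).det = 0 := by
    simpa [← submatrix_submatrix, det_submatrix_equiv_self] using
      hv (Sum.elim f (fun _ => i) ∘ finSumFinEquiv.symm)
        (Sum.elim g (fun _ => j) ∘ finSumFinEquiv.symm)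
  have hblocks : P.submatrix (Sum.elim f fun _ : Fin 1 => i) (Sum.elim g fun _ : Fin 1 => j) =
      fromBlocks B (P.submatrix f fun _ => j) (P.submatrix (fun _ => i) g)
        (P.submatrix (fun _ => i) fun _ => j) := by
    ext (a | a) (b | b) <;> rfl
  rw [hblocks, det_fromBlocks₁₁, hu.mul_right_eq_zero, det_unique] at hborder
  simpa [sub_eq_zero, mul_apply, invOf_eq_nonsing_inv] using hborder

variable [Fintype ι] [Fintype κ]

def HasSplitFactorization (P : Matrix ι κ A) (r : ℕ) : Prop :=
  ∃ (Q : Matrix ι (Fin r) A) (R : Matrix (Fin r) κ A),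
    P = Q * R ∧ (∃ T : Matrix (Fin r) ι A, T * Q = 1) ∧
      ∃ S : Matrix κ (Fin r) A, R * S = 1

theorem hasSplitFactorization_of_minors [DecidableEq ι] [DecidableEq κ]
    (hv : ∀ (f : Fin (r + 1) → ι) (g : Fin (r + 1) → κ), (P.submatrix f g).det = 0)
    {f : Fin r → ι} {g : Fin r → κ} (hu : IsUnit (P.submatrix f g).det) :
    P.HasSplitFactorization r := by
  refine ⟨P.submatrix id g, (P.submatrix f g)⁻¹ * P.submatrix f id, ?_,
    ⟨(P.submatrix f g)⁻¹ * (1 : Matrix ι ι A).submatrix f (Equiv.refl ι), ?_⟩,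
    ⟨(1 : Matrix κ κ A).submatrix (Equiv.refl κ) g, ?_⟩⟩
  · rw [← Matrix.mul_assoc]
    exact eq_mul_inv_mul_of_isUnit_det_submatrix hv hu
  · rw [Matrix.mul_assoc, one_submatrix_mul]
    exact nonsing_inv_mul _ hu
  · rw [Matrix.mul_assoc, mul_submatrix_one]
    exact nonsing_inv_mul _ hu

theorem hasSplitFactorization_of_linearMap (Q : (Fin r → A) →ₗ[A] (ι → A))
    (R : (κ → A) →ₗ[A] (Fin r → A)) (hP : Q ∘ₗ R = P.mulVecLin)
    (T : (ι → A) →ₗ[A] (Fin r → A)) (hT : T ∘ₗ Q = LinearMap.id)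
    (S : (Fin r → A) →ₗ[A] (κ → A)) (hS : R ∘ₗ S = LinearMap.id) :
    P.HasSplitFactorization r := by
  classical
  refine ⟨LinearMap.toMatrix' Q, LinearMap.toMatrix' R, ?_, ⟨LinearMap.toMatrix' T, ?_⟩,
    ⟨LinearMap.toMatrix' S, ?_⟩⟩
  · rw [← LinearMap.toMatrix'_comp, hP, ← toLin'_apply', LinearMap.toMatrix'_toLin']
  · rw [← LinearMap.toMatrix'_comp, hT, LinearMap.toMatrix'_id]
  · rw [← LinearMap.toMatrix'_comp, hS, LinearMap.toMatrix'_id]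

theorem HasSplitFactorization.det_submatrix_eq_zero (h : P.HasSplitFactorization r)
    (f : Fin (r + 1) → ι) (g : Fin (r + 1) → κ) : (P.submatrix f g).det = 0 := by
  obtain ⟨Q, R, rfl, -, -⟩ := h
  rw [submatrix_mul _ _ _ _ _ Function.bijective_id]
  exact det_mul_eq_zero_of_card_lt _ _ (by simp)

variable [IsLocalRing A]

theorem HasSplitFactorization.exists_isUnit_det_submatrix (h : P.HasSplitFactorization r) :
    ∃ (f : Fin r → ι) (g : Fin r → κ), IsUnit (P.submatrix f g).det := by
  obtain ⟨Q, R, rfl, ⟨T, hT⟩, ⟨S, hS⟩⟩ := h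
  have hunit : IsUnit (T * ((Q * R) * S)).det := by
    rw [Matrix.mul_assoc, hS, Matrix.mul_one, hT, det_one]
    exact isUnit_one
  obtain ⟨f, hf⟩ := exists_isUnit_det_submatrix_right hunit
  rw [submatrix_mul _ _ _ _ _ Function.bijective_id] at hf
  obtain ⟨g, hg⟩ := exists_isUnit_det_submatrix_left hf
  exact ⟨f, g, by simpa using hg⟩

theorem HasSplitFactorization.exists_coker_linearEquiv (h : P.HasSplitFactorization r) :
    ∃ s, r + s = Fintype.card ι ∧
      Nonempty (((ι → A) ⧸ LinearMap.range P.mulVecLin) ≃ₗ[A] (Fin s → A)) := by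
  obtain ⟨Q, R, rfl, ⟨T, hT⟩, ⟨S, hS⟩⟩ := h
  have hrange : LinearMap.range (Q * R).mulVecLin = LinearMap.range Q.mulVecLin := by
    rw [mulVecLin_mul, LinearMap.range_comp_of_range_eq_top]
    exact LinearMap.range_eq_top.mpr fun y => ⟨S *ᵥ y, by simp [mulVec_mulVec, hS]⟩
  have hretract : T.mulVecLin ∘ₗ Q.mulVecLin = LinearMap.id := by
    rw [← mulVecLin_mul, hT, mulVecLin_one]
  obtain ⟨e, -⟩ := (LinearMap.exact_map_mkQ_range Q.mulVecLin).splitInjectiveEquiv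
    (Submodule.mkQ_surjective _) ⟨_, hretract⟩
  obtain ⟨s, hs, ⟨w⟩⟩ := exists_linearEquiv_fin_of_linearEquiv_prod e
  exact ⟨s, by simpa using hs, ⟨(Submodule.quotEquivOfEq _ _ hrange).trans w⟩⟩

theorem hasSplitFactorization_of_coker_linearEquiv {s : ℕ} (hrs : r + s = Fintype.card ι)
    (h : ((ι → A) ⧸ LinearMap.range P.mulVecLin) ≃ₗ[A] (Fin s → A)) :
    P.HasSplitFactorization r := by
  set K := LinearMap.range P.mulVecLin
  have : Module.Projective A ((ι → A) ⧸ K) := .of_equiv' h.symm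
  obtain ⟨l, hl⟩ := K.mkQ.exists_rightInverse_of_surjective K.range_mkQ
  obtain ⟨e, he, -⟩ := (LinearMap.exact_subtype_mkQ K).splitSurjectiveEquiv
    K.injective_subtype ⟨l, hl⟩
  obtain ⟨r', hr', ⟨w⟩⟩ := exists_linearEquiv_fin_of_linearEquiv_prod
    (e ≪≫ₗ (LinearEquiv.refl A K).prodCongr h ≪≫ₗ LinearEquiv.prodComm A K _)
  obtain rfl : r' = r := by rw [Module.finrank_fintype_fun_eq_card] at hr'; omega
  set R := w.toLinearMap ∘ₗ P.mulVecLin.rangeRestrict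
  obtain ⟨S, hS⟩ := R.exists_rightInverse_of_surjective
    (LinearMap.range_eq_top.mpr (w.surjective.comp P.mulVecLin.surjective_rangeRestrict))
  refine hasSplitFactorization_of_linearMap (K.subtype ∘ₗ w.symm.toLinearMap) R ?_
    (w.toLinearMap ∘ₗ LinearMap.fst A K _ ∘ₗ e.toLinearMap) ?_ S hS
  · ext; simp [R]
  · rw [he]; ext; simp

end Matrix

/-- Over a commutative local ring, a map of finite free modules (given by a matrix `P`)
has strictly constant rank `r` (all `(r+1)×(r+1)` minors vanish and some `r×r` minor is a
unit) iff its cokernel is free of rank `e − r`, where `e` is the rank of the target. -/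
theorem strictly_constant_rank_iff_coker_free
    {A : Type*} [CommRing A] [IsLocalRing A]
    (m e r : ℕ) (P : Matrix (Fin e) (Fin m) A) :
    ((∀ (f : Fin (r + 1) → Fin e) (g : Fin (r + 1) → Fin m), (P.submatrix f g).det = 0) ∧
      (∃ (f : Fin r → Fin e) (g : Fin r → Fin m), IsUnit (P.submatrix f g).det))
    ↔ ∃ s : ℕ, r + s = e ∧
        Nonempty (((Fin e → A) ⧸ LinearMap.range P.mulVecLin) ≃ₗ[A] (Fin s → A)) := by
  constructor
  · rintro ⟨hv, f, g, hu⟩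
    simpa using (hasSplitFactorization_of_minors hv hu).exists_coker_linearEquiv
  · rintro ⟨s, hrs, ⟨h⟩⟩
    have hsplit := hasSplitFactorization_of_coker_linearEquiv (by simpa using hrs) h
    exact ⟨hsplit.det_submatrix_eq_zero, hsplit.exists_isUnit_det_submatrix⟩
end

section
/- Let A be a commutative local ring and ψ : M → N a homomorphism between finitely generated free A-modules of strictly constant rank r (i.e. Λ^{r+1}ψ = 0 and some r×r minor of ψ is a unit). Then ker ψ and im ψ are free A-modules of ranks rank(M) − r and r respectively, and the short exact sequences 0 → ker ψ → M → im ψ → 0 and 0 → im ψ → N → coker ψ → 0 both split. -/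
/-!
If the `r × r` minor `B = P.submatrix f g` is invertible and all `(r+1)`-minors vanish, the
Schur complement of `B` in each bordered `(r+1)`-minor is zero, which says exactly that
`P = C * B⁻¹ * R` for the column strip `C` and the row strip `R` through `B`. Both strips
contain `B`, so `B⁻¹ * R` has a right inverse and `C` has a left inverse: `P` factors as a
split surjection `A^m → A^r` followed by a split injection `A^r → A^e`. Hence `ker P` and
`im P` are direct summands, `im P ≅ A^r`, and `ker P` is projective of rank `m - r`, so free
over the local ring `A`.
-/

open Module

namespace LinearMap

section Ring

variable {R M K N : Type*} [Ring R] [AddCommGroup M] [Module R M] [AddCommGroup K] [Module R K]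
  [AddCommGroup N] [Module R N]

theorem exists_linearEquiv_ker_prod_of_comp_eq_id {ρ : M →ₗ[R] K} {s : K →ₗ[R] M}
    (h : ρ ∘ₗ s = id) :
    ∃ e : M ≃ₗ[R] ker ρ × K, (ker ρ).subtype = e.symm.toLinearMap ∘ₗ inl R _ _ :=
  let e := (exact_subtype_ker_map ρ).splitSurjectiveEquiv Subtype.val_injective ⟨s, h⟩
  ⟨e.1, e.2.1⟩

theorem exists_retraction_ker_of_comp_eq_id {ρ : M →ₗ[R] K} {s : K →ₗ[R] M}
    (h : ρ ∘ₗ s = id) : ∃ p : M →ₗ[R] ker ρ, ∀ x : ker ρ, p x = x := by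
  obtain ⟨e, he⟩ := exists_linearEquiv_ker_prod_of_comp_eq_id h
  refine ⟨fst R _ _ ∘ₗ e.toLinearMap, fun x => ?_⟩
  have hx : (x : M) = e.symm (x, 0) := LinearMap.congr_fun he x
  simp [hx]

theorem exists_retraction_range_of_comp_eq_id {c : K →ₗ[R] N} {t : N →ₗ[R] K}
    (h : t ∘ₗ c = id) : ∃ p : N →ₗ[R] range c, ∀ x : range c, p x = x := by
  have ht : Function.LeftInverse t c := LinearMap.congr_fun h
  refine ⟨(LinearEquiv.ofLeftInverse ht).toLinearMap ∘ₗ t, fun x => ?_⟩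
  simpa using (LinearEquiv.ofLeftInverse ht).apply_symm_apply x

end Ring

section IsLocalRing

variable {R M K : Type*} [CommRing R] [IsLocalRing R] [AddCommGroup M] [Module R M]
  [Module.Free R M] [Module.Finite R M] [AddCommGroup K] [Module R K] [Module.Free R K]
  [Module.Finite R K]

theorem nonempty_linearEquiv_ker_of_comp_eq_id {ρ : M →ₗ[R] K} {s : K →ₗ[R] M}
    (h : ρ ∘ₗ s = id) : Nonempty (ker ρ ≃ₗ[R] (Fin (finrank R M - finrank R K) → R)) := by
  obtain ⟨e, he⟩ := exists_linearEquiv_ker_prod_of_comp_eq_id h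
  have hsplit : (fst R _ _ ∘ₗ e.toLinearMap) ∘ₗ (ker ρ).subtype = id := by
    ext x; simp [he]
  have : Module.Finite R (ker ρ) := .of_surjective _ (surjective_of_comp_eq_id _ _ hsplit)
  have : Module.Projective R (ker ρ) := .of_split _ _ hsplit
  have : Module.Free R (ker ρ) := free_of_flat_of_isLocalRing
  have hrank : finrank R M = finrank R (ker ρ) + finrank R K :=
    e.finrank_eq.trans finrank_prod
  exact ⟨LinearEquiv.ofFinrankEq _ _ (by simp [hrank])⟩

end IsLocalRing

end LinearMap

namespace Matrix

variable {A ι κ : Type*} [CommRing A] {r : ℕ}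

theorem submatrix_mul_invOf_mul_submatrix_eq_self (P : Matrix ι κ A)
    (h1 : ∀ (f : Fin (r + 1) → ι) (g : Fin (r + 1) → κ), (P.submatrix f g).det = 0)
    (f : Fin r → ι) (g : Fin r → κ) [Invertible (P.submatrix f g)] :
    P.submatrix id g * ⅟(P.submatrix f g) * P.submatrix f id = P := by
  ext i j
  set B := P.submatrix f g
  have hborder : (P.submatrix (Fin.snoc f i) (Fin.snoc g j)).submatrix finSumFinEquiv
      finSumFinEquiv = fromBlocks B (of fun k (_ : Fin 1) => P (f k) j)
        (of fun (_ : Fin 1) l => P i (g l)) (of fun _ _ => P i j) := by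
    ext (k | k) (l | l) <;>
      simp [B, fromBlocks, Fin.snoc, Fin.castLT]
  have hminor := h1 (Fin.snoc f i) (Fin.snoc g j)
  rw [← det_submatrix_equiv_self finSumFinEquiv, hborder, det_fromBlocks₁₁, det_fin_one]
    at hminor
  have hschur := (isUnit_det_of_invertible B).mul_right_eq_zero.mp hminor
  rw [sub_apply, sub_eq_zero] at hschur
  simpa [mul_apply] using hschur.symm

theorem exists_split_factorization_of_minors [Fintype ι] [Fintype κ] [DecidableEq ι]
    [DecidableEq κ] (P : Matrix ι κ A)
    (h1 : ∀ (f : Fin (r + 1) → ι) (g : Fin (r + 1) → κ), (P.submatrix f g).det = 0)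
    (h2 : ∃ (f : Fin r → ι) (g : Fin r → κ), IsUnit (P.submatrix f g).det) :
    ∃ (C : Matrix ι (Fin r) A) (Q : Matrix (Fin r) κ A) (S : Matrix κ (Fin r) A)
      (T : Matrix (Fin r) ι A), C * Q = P ∧ Q * S = 1 ∧ T * C = 1 := by
  obtain ⟨f, g, hB⟩ := h2
  have : Invertible (P.submatrix f g) := invertibleOfIsUnitDet _ hB
  refine ⟨P.submatrix id g, ⅟(P.submatrix f g) * P.submatrix f id,
    (1 : Matrix κ κ A).submatrix id g, ⅟(P.submatrix f g) * (1 : Matrix ι ι A).submatrix f id,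
    ?_, ?_, ?_⟩
  · rw [← Matrix.mul_assoc, submatrix_mul_invOf_mul_submatrix_eq_self P h1]
  · rw [Matrix.mul_assoc, ← Equiv.coe_refl, mul_submatrix_one]
    simp
  · rw [Matrix.mul_assoc, ← Equiv.coe_refl, one_submatrix_mul]
    simp

end Matrix

/-- Over a commutative local ring, if a map of finite free modules (given by a matrix `P`)
has strictly constant rank `r`, then its kernel and image are free of ranks `m − r` and
`r`, and the sequences `0 → ker → M → im → 0` and `0 → im → N → coker → 0` split. -/
theorem strictly_constant_rank_split
    {A : Type*} [CommRing A] [IsLocalRing A]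
    (m e r : ℕ) (P : Matrix (Fin e) (Fin m) A)
    (h1 : ∀ (f : Fin (r + 1) → Fin e) (g : Fin (r + 1) → Fin m), (P.submatrix f g).det = 0)
    (h2 : ∃ (f : Fin r → Fin e) (g : Fin r → Fin m), IsUnit (P.submatrix f g).det) :
    Nonempty ((LinearMap.ker P.mulVecLin) ≃ₗ[A] (Fin (m - r) → A)) ∧
    Nonempty ((LinearMap.range P.mulVecLin) ≃ₗ[A] (Fin r → A)) ∧
    (∃ p : (Fin m → A) →ₗ[A] LinearMap.ker P.mulVecLin,
      ∀ x : LinearMap.ker P.mulVecLin, p (x : Fin m → A) = x) ∧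
    (∃ p : (Fin e → A) →ₗ[A] LinearMap.range P.mulVecLin,
      ∀ x : LinearMap.range P.mulVecLin, p (x : Fin e → A) = x) := by
  obtain ⟨C, Q, S, T, hP, hQS, hTC⟩ := P.exists_split_factorization_of_minors h1 h2
  have hsection : Q.mulVecLin ∘ₗ S.mulVecLin = LinearMap.id := by
    rw [← Matrix.mulVecLin_mul, hQS, Matrix.mulVecLin_one]
  have hretraction : T.mulVecLin ∘ₗ C.mulVecLin = LinearMap.id := by
    rw [← Matrix.mulVecLin_mul, hTC, Matrix.mulVecLin_one]
  have hker := LinearMap.ker_comp_of_ker_eq_bot Q.mulVecLin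
    (LinearMap.ker_eq_bot_of_inverse hretraction)
  have hrange := LinearMap.range_comp_of_range_eq_top C.mulVecLin
    (LinearMap.range_eq_top_of_surjective _ (LinearMap.surjective_of_comp_eq_id _ _ hsection))
  obtain ⟨eker⟩ := LinearMap.nonempty_linearEquiv_ker_of_comp_eq_id hsection
  rw [finrank_fin_fun, finrank_fin_fun] at eker
  rw [← hP, Matrix.mulVecLin_mul, hker, hrange]
  exact ⟨⟨eker⟩,
    ⟨(LinearEquiv.ofInjective _ (LinearMap.injective_of_comp_eq_id _ _ hretraction)).symm⟩,
    LinearMap.exists_retraction_ker_of_comp_eq_id hsection,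
    LinearMap.exists_retraction_range_of_comp_eq_id hretraction⟩
end

section
/- Let V be a finite-dimensional vector space over 𝔽_q with dim V ≥ 1, and ψ : 𝔽_q → ℂ^× a nontrivial additive character. Let f : P_V → ℂ be a function on the set of lines of V with ∑_{J ∈ P_V} f(J) = 0. Define g : V → ℂ by g(0) = 0 and g(v) = f(𝔽_q·v) for v ≠ 0. Then for every nonzero linear functional ω : V → 𝔽_q, ∑_{v ∈ V} g(v) ψ(ω(v)) = q · ∑_{J ∈ P_V, J ⊆ ker ω} f(J), and moreover ∑_{v ∈ V} g(v) ψ(0·v) = ∑_{v ∈ V} g(v) = 0. -/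
/-!
Grouping the nonzero vectors of `V` by the line they span turns `∑ᶠ v, g v * ψ (ω v)` into
`∑_J f J * ∑_{v ∈ J \ {0}} ψ (ω v)`. On a line `J` the map `v ↦ ψ (ω v)` is a character of `J`,
trivial exactly when `J ≤ ker ω`, so the inner sum is `q - 1` or `-1`; the `-1` terms add up to
`-∑_J f J = 0`. Taking `ω = 0` in the same identity gives `∑ᶠ v, g v = q * ∑_J f J = 0`.
-/

open Module

instance Submodule.finite {R M : Type*} [Semiring R] [AddCommMonoid M] [Module R M] [Finite M] :
    Finite (Submodule R M) :=
  Finite.of_injective _ SetLike.coe_injective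

section

variable {F V : Type*} [Field F] [AddCommGroup V] [Module F V]

theorem Submodule.span_singleton_eq_of_finrank_eq_one {J : Submodule F V}
    (hJ : finrank F J = 1) {v : V} (hv : v ∈ J) (hv0 : v ≠ 0) : span F {v} = J :=
  have : FiniteDimensional F J := Module.finite_of_finrank_eq_succ hJ
  eq_of_le_of_finrank_eq ((span_singleton_le_iff_mem _ _).2 hv)
    (by rw [finrank_span_singleton hv0, hJ])

theorem Submodule.natCard_eq_of_finrank_eq_one {J : Submodule F V} (hJ : finrank F J = 1) :
    Nat.card J = Nat.card F :=
  have : FiniteDimensional F J := Module.finite_of_finrank_eq_succ hJ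
  Nat.card_congr (LinearEquiv.ofFinrankEq J F (by rw [hJ, finrank_self])).toEquiv

theorem finsum_eq_finsum_mem_lines [Finite V] {M : Type*} [AddCommMonoid M] {h : V → M}
    (h0 : h 0 = 0) :
    ∑ᶠ v, h v = ∑ᶠ J ∈ {J : Submodule F V | finrank F J = 1}, ∑ᶠ v ∈ (J : Set V) \ {0}, h v := by
  have hdisj : {J : Submodule F V | finrank F J = 1}.PairwiseDisjoint
      (fun J => (J : Set V) \ {0}) := by
    intro J hJ J' hJ' hne
    refine Set.disjoint_left.2 fun v hv hv' => hne ?_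
    rw [← Submodule.span_singleton_eq_of_finrank_eq_one hJ hv.1 hv.2,
      Submodule.span_singleton_eq_of_finrank_eq_one hJ' hv'.1 hv'.2]
  have hcover : ⋃ J ∈ {J : Submodule F V | finrank F J = 1}, (J : Set V) \ {0} = {0}ᶜ := by
    ext v
    simp only [Set.mem_iUnion, Set.mem_sdiff, SetLike.mem_coe, Set.mem_singleton_iff,
      exists_prop, Set.mem_ofPred_eq, Set.mem_compl_iff]
    exact ⟨fun ⟨_, _, _, hv⟩ => hv,
      fun hv => ⟨_, finrank_span_singleton hv, Submodule.mem_span_singleton_self v, hv⟩⟩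
  rw [← finsum_mem_biUnion hdisj (Set.toFinite _) (fun _ _ => Set.toFinite _), hcover,
    ← finsum_mem_insert_zero h0, Set.insert_eq, Set.union_compl_self, finsum_mem_univ]

section AddChar

variable {R : Type*} [CommRing R] [Finite V] (ψ : AddChar F R) {ω : V →ₗ[F] F}
  {W : Submodule F V}

theorem AddChar.finsum_mem_submodule_of_le_ker (hW : W ≤ LinearMap.ker ω) :
    ∑ᶠ v ∈ (W : Set V), ψ (ω v) = Nat.card W := by
  have : Fintype W := Fintype.ofFinite W
  rw [← finsum_set_coe_eq_finsum_mem, finsum_eq_sum_of_fintype]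
  simp [fun w : W => LinearMap.mem_ker.1 (hW w.2)]

variable {ψ} in
theorem AddChar.finsum_mem_submodule_of_not_le_ker [IsDomain R] (hψ : ψ ≠ 1)
    (hW : ¬ W ≤ LinearMap.ker ω) :
    ∑ᶠ v ∈ (W : Set V), ψ (ω v) = 0 := by
  have : Fintype W := Fintype.ofFinite W
  obtain ⟨w, hwW, hw⟩ : ∃ w ∈ W, ω w ≠ 0 := by simpa [SetLike.not_le_iff_exists] using hW
  obtain ⟨a, ha⟩ := AddChar.ne_one_iff.1 hψ
  let χ : AddChar W R := ψ.compAddMonoidHom (ω.domRestrict W).toAddMonoidHom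
  have hχ : χ ≠ 1 := AddChar.ne_one_iff.2
    ⟨⟨(a / ω w) • w, W.smul_mem _ hwW⟩, by simpa [χ, hw] using ha⟩
  rw [← finsum_set_coe_eq_finsum_mem, finsum_eq_sum_of_fintype]
  exact AddChar.sum_eq_zero_of_ne_one hχ

theorem AddChar.finsum_mem_submodule_sdiff_zero :
    ∑ᶠ v ∈ (W : Set V) \ {0}, ψ (ω v) = ∑ᶠ v ∈ (W : Set V), ψ (ω v) - 1 := by
  have h := finsum_mem_insert (fun v => ψ (ω v))
    (Set.notMem_sdiff_of_mem rfl : (0 : V) ∉ (W : Set V) \ {0}) (Set.toFinite _)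
  rw [Set.insert_sdiff_self_of_mem W.zero_mem, map_zero, AddChar.map_zero_eq_one] at h
  rw [h, add_sub_cancel_left]

end AddChar

theorem finsum_mul_addChar_eq_card_mul_finsum_lines_le_ker {R : Type*} [CommRing R] [IsDomain R]
    [Finite V] {ψ : AddChar F R} (hψ : ψ ≠ 1) {f : Submodule F V → R}
    (hf : ∑ᶠ J ∈ {J : Submodule F V | finrank F J = 1}, f J = 0)
    {g : V → R} (hg0 : g 0 = 0) (hg : ∀ v : V, v ≠ 0 → g v = f (Submodule.span F {v}))
    (ω : V →ₗ[F] F) :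
    ∑ᶠ v, g v * ψ (ω v) =
      Nat.card F * ∑ᶠ J ∈ {J : Submodule F V | finrank F J = 1 ∧ J ≤ LinearMap.ker ω}, f J := by
  set lines := {J : Submodule F V | finrank F J = 1}
  calc ∑ᶠ v, g v * ψ (ω v)
      = ∑ᶠ J ∈ lines, f J * ∑ᶠ v ∈ (J : Set V) \ {0}, ψ (ω v) := by
        rw [finsum_eq_finsum_mem_lines (F := F) (by rw [hg0, zero_mul])]
        refine finsum_mem_congr rfl fun J hJ => ?_
        rw [mul_finsum_mem' _ _ (Set.toFinite _)]
        refine finsum_mem_congr rfl fun v hv => ?_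
        rw [hg v hv.2, Submodule.span_singleton_eq_of_finrank_eq_one hJ hv.1 hv.2]
    _ = ∑ᶠ J ∈ lines, f J * ∑ᶠ v ∈ (J : Set V), ψ (ω v) := by
        simp_rw [AddChar.finsum_mem_submodule_sdiff_zero, mul_sub, mul_one]
        rw [finsum_mem_sub_distrib _ _ (Set.toFinite _), hf, sub_zero]
    _ = ∑ᶠ J ∈ lines ∩ {J | J ≤ LinearMap.ker ω}, f J * ∑ᶠ v ∈ (J : Set V), ψ (ω v)
          + ∑ᶠ J ∈ lines \ {J | J ≤ LinearMap.ker ω}, f J * ∑ᶠ v ∈ (J : Set V), ψ (ω v) :=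
        (finsum_mem_inter_add_sdiff _ (Set.toFinite _)).symm
    _ = Nat.card F * ∑ᶠ J ∈ {J : Submodule F V | finrank F J = 1 ∧ J ≤ LinearMap.ker ω}, f J := by
        rw [finsum_mem_of_eqOn_zero (s := lines \ _) fun J hJ => by
          rw [Pi.zero_apply, AddChar.finsum_mem_submodule_of_not_le_ker hψ hJ.2, mul_zero],
          add_zero, mul_finsum_mem' _ _ (Set.toFinite _)]
        refine finsum_mem_congr rfl fun J hJ => ?_
        rw [AddChar.finsum_mem_submodule_of_le_ker ψ hJ.2,
          Submodule.natCard_eq_of_finrank_eq_one hJ.1, mul_comm]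

end

theorem fourier_of_line_function_general
    {F : Type*} [Field F] [Fintype F]
    {V : Type*} [AddCommGroup V] [Module F V] [FiniteDimensional F V]
    (ψ : AddChar F ℂ) (hψ : ∃ a : F, ψ a ≠ 1)
    (f : Submodule F V → ℂ)
    (hf : ∑ᶠ J ∈ {J : Submodule F V | finrank F ↥J = 1}, f J = 0)
    (g : V → ℂ) (hg0 : g 0 = 0)
    (hg : ∀ v : V, v ≠ 0 → g v = f (Submodule.span F {v})) :
    (∀ ω : V →ₗ[F] F, ω ≠ 0 →
      ∑ᶠ v : V, g v * ψ (ω v) =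
        (Fintype.card F : ℂ) *
          ∑ᶠ J ∈ {J : Submodule F V | finrank F ↥J = 1 ∧ J ≤ LinearMap.ker ω}, f J) ∧
    (∑ᶠ v : V, g v = 0) := by
  have : Finite V := Module.finite_of_finite F
  have key :=
    finsum_mul_addChar_eq_card_mul_finsum_lines_le_ker (AddChar.ne_one_iff.2 hψ) hf hg0 hg
  refine ⟨fun ω _ => by rw [key ω, Nat.card_eq_fintype_card], ?_⟩
  have key0 := key 0
  simp only [LinearMap.zero_apply, AddChar.map_zero_eq_one, mul_one, LinearMap.ker_zero, le_top,
    and_true] at key0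
  rw [key0, hf, mul_zero]

/-- Fourier transform of a mean-zero function on lines: for `f` on lines of `V` with
total sum `0`, extended to `g` on `V` by `g(0)=0`, `g(v)=f(𝔽_q·v)`, one has
`∑_v g(v) ψ(ω v) = q · ∑_{lines J ⊆ ker ω} f(J)` for every nonzero functional `ω`,
and `∑_v g(v) = 0`. -/
theorem fourier_of_line_function
    {F : Type*} [Field F] [Fintype F]
    {V : Type*} [AddCommGroup V] [Module F V] [FiniteDimensional F V]
    (hV : 1 ≤ finrank F V)
    (ψ : AddChar F ℂ) (hψ : ∃ a : F, ψ a ≠ 1)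
    (f : Submodule F V → ℂ)
    (hf : ∑ᶠ J ∈ {J : Submodule F V | finrank F ↥J = 1}, f J = 0)
    (g : V → ℂ) (hg0 : g 0 = 0)
    (hg : ∀ v : V, v ≠ 0 → g v = f (Submodule.span F {v})) :
    (∀ ω : V →ₗ[F] F, ω ≠ 0 →
      ∑ᶠ v : V, g v * ψ (ω v) =
        (Fintype.card F : ℂ) *
          ∑ᶠ J ∈ {J : Submodule F V | finrank F ↥J = 1 ∧ J ≤ LinearMap.ker ω}, f J) ∧
    (∑ᶠ v : V, g v = 0) :=
  fourier_of_line_function_general ψ hψ f hf g hg0 hg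
end
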